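/- Let X be a positive definite n×n matrix with smallest eigenvalue λ_min and largest eigenvalue λ_max, and let ω ∈ ℝ. Define the operator G_{X,ω}(s) on M_n(ℂ) by G_{X,ω}(s)(A) = e^{ωs} X^s A X^{-s} + e^{ω(1-s)} X^{1-s} A X^{-(1-s)}. Then for every s ∈ [0, 1/2] and every A ∈ M_n(ℂ), 2·√(e^ω · λ_min/λ_max)·⟨A,A⟩ ≤ ⟨A, G_{X,ω}(s)(A)⟩ ≤ (1 + e^ω · λ_max/λ_min)·⟨A,A⟩, where ⟨A,B⟩ = Tr(A*B) is the Hilbert–Schmidt inner product. -/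
import Mathlib


open Matrix
open scoped ComplexOrder

/-- Real matrix power via continuous functional calculus. -/
noncomputable def mpow {n : ℕ} (A : Matrix (Fin n) (Fin n) ℂ) (s : ℝ) :
    Matrix (Fin n) (Fin n) ℂ :=
  cfc (fun x : ℝ => x ^ s) A

/-- The operator `G_{X,ω}(s)(A) = e^{ωs} X^s A X^{-s} + e^{ω(1-s)} X^{1-s} A X^{-(1-s)}`. -/
noncomputable def Gop {n : ℕ} (X : Matrix (Fin n) (Fin n) ℂ) (ω s : ℝ)
    (A : Matrix (Fin n) (Fin n) ℂ) : Matrix (Fin n) (Fin n) ℂ :=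
  (Real.exp (ω * s) : ℂ) • (mpow X s * A * mpow X (-s)) +
    (Real.exp (ω * (1 - s)) : ℂ) • (mpow X (1 - s) * A * mpow X (-(1 - s)))

private lemma scalar_bound (m R r s : ℝ) (hm : 0 < m) (hmr : m ≤ r) (hrR : r ≤ R)
    (hs0 : 0 ≤ s) (hs1 : s ≤ 1/2) :
    2 * Real.sqrt m ≤ r ^ s + r ^ (1 - s) ∧ r ^ s + r ^ (1 - s) ≤ 1 + R := by
  have hr : (0:ℝ) < r := hm.trans_le hmr
  have hmul : r ^ s * r ^ (1 - s) = r := by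
    rw [← Real.rpow_add hr]; simp
  constructor
  · have h1 : Real.sqrt m ≤ Real.sqrt r := Real.sqrt_le_sqrt hmr
    have h2 : Real.sqrt (r ^ s) * Real.sqrt (r ^ (1 - s)) = Real.sqrt r := by
      rw [← Real.sqrt_mul (Real.rpow_nonneg hr.le _), hmul]
    nlinarith [two_mul_le_add_sq (Real.sqrt (r ^ s)) (Real.sqrt (r ^ (1 - s))),
      Real.sq_sqrt (Real.rpow_nonneg hr.le s),
      Real.sq_sqrt (Real.rpow_nonneg hr.le (1 - s)), Real.sqrt_nonneg m]
  · have key : (1 - r ^ s) * (1 - r ^ (1 - s)) ≥ 0 := by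
      rcases le_or_gt r 1 with h | h
      · have a1 : r ^ s ≤ 1 := Real.rpow_le_one hr.le h hs0
        have a2 : r ^ (1 - s) ≤ 1 := Real.rpow_le_one hr.le h (by linarith)
        nlinarith
      · have a1 : 1 ≤ r ^ s := Real.one_le_rpow h.le hs0
        have a2 : 1 ≤ r ^ (1 - s) := Real.one_le_rpow h.le (by linarith)
        nlinarith
    nlinarith

private lemma trace_conj_diag {n : ℕ} (U A : Matrix (Fin n) (Fin n) ℂ)
    (hU : U * star U = 1) (hU' : star U * U = 1) (d e : Fin n → ℂ) :
    (Aᴴ * ((U * diagonal d * star U) * A * (U * diagonal e * star U))).trace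
      = ∑ l, ∑ k, d k * e l * (Complex.normSq ((star U * A * U) k l) : ℂ) := by
  set B := star U * A * U with hB
  have hA : A = U * B * star U := by
    rw [hB]
    rw [show U * (star U * A * U) * star U = (U * star U) * A * (U * star U) by
      noncomm_ring]
    rw [hU]; simp
  have hBH : Aᴴ = U * Bᴴ * star U := by
    rw [hA]
    simp [conjTranspose_mul, Matrix.star_eq_conjTranspose, mul_assoc]
  rw [hBH]
  conv_lhs => rw [hA]
  have collapse : (U * Bᴴ * star U) * ((U * diagonal d * star U) * (U * B * star U) *
      (U * diagonal e * star U)) = U * (Bᴴ * diagonal d * B * diagonal e) * star U :=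
    calc (U * Bᴴ * star U) * ((U * diagonal d * star U) * (U * B * star U) *
        (U * diagonal e * star U))
        = U * Bᴴ * ((star U * U) * (diagonal d * ((star U * U) * (B *
            ((star U * U) * (diagonal e * star U)))))) := by noncomm_ring
      _ = U * (Bᴴ * diagonal d * B * diagonal e) * star U := by rw [hU']; noncomm_ring
  rw [collapse]
  have tr1 : (U * (Bᴴ * diagonal d * B * diagonal e) * star U).trace
      = (Bᴴ * diagonal d * B * diagonal e).trace := by
    rw [trace_mul_cycle, ← mul_assoc, hU', one_mul]
  rw [tr1]
  have entry : ∀ l, (Bᴴ * diagonal d * B * diagonal e) l l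
      = ∑ k, d k * e l * (Complex.normSq (B k l) : ℂ) := by
    intro l
    rw [Matrix.mul_diagonal, Matrix.mul_apply, Finset.sum_mul]
    refine Finset.sum_congr rfl fun k _ => ?_
    rw [Matrix.mul_diagonal, Matrix.conjTranspose_apply, Complex.normSq_eq_conj_mul_self]
    simp [Complex.star_def]
    ring
  simp only [Matrix.trace, Matrix.diag]
  exact Finset.sum_congr rfl fun l _ => entry l

private lemma mpow_eq {n : ℕ} {X : Matrix (Fin n) (Fin n) ℂ} (hH : X.IsHermitian) (t : ℝ) :
    mpow X t = (hH.eigenvectorUnitary : Matrix (Fin n) (Fin n) ℂ) *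
      diagonal (fun i => ((hH.eigenvalues i ^ t : ℝ) : ℂ)) *
      star (hH.eigenvectorUnitary : Matrix (Fin n) (Fin n) ℂ) := by
  rw [mpow, hH.cfc_eq]
  rfl

/-- Two-sided spectral bound for the quadratic form of `G_{X,ω}(s)` with respect to the
Hilbert–Schmidt inner product, for `s ∈ [0, 1/2]`. -/
theorem Gop_spectral_bounds {n : ℕ}
    (X : Matrix (Fin n) (Fin n) ℂ) (hX : X.PosDef) (lmin lmax ω : ℝ)
    (hlmin : 0 < lmin)
    (hspec : ∀ i, lmin ≤ hX.1.eigenvalues i ∧ hX.1.eigenvalues i ≤ lmax)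
    (s : ℝ) (hs : s ∈ Set.Icc (0:ℝ) (1/2)) (A : Matrix (Fin n) (Fin n) ℂ) :
    ((2 * Real.sqrt (Real.exp ω * lmin / lmax) : ℝ) : ℂ) * (Aᴴ * A).trace
        ≤ (Aᴴ * Gop X ω s A).trace ∧
      (Aᴴ * Gop X ω s A).trace
        ≤ ((1 + Real.exp ω * lmax / lmin : ℝ) : ℂ) * (Aᴴ * A).trace := by
  obtain ⟨hs0, hs1⟩ := hs
  set lam := hX.1.eigenvalues with hlam
  have hpos : ∀ i, 0 < lam i := fun i => hX.eigenvalues_pos i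
  set U : Matrix (Fin n) (Fin n) ℂ := (hX.1.eigenvectorUnitary : Matrix (Fin n) (Fin n) ℂ)
    with hUdef
  have hmem := hX.1.eigenvectorUnitary.2
  rw [Unitary.mem_iff] at hmem
  have hU : U * star U = 1 := hmem.2
  have hU' : star U * U = 1 := hmem.1
  set B := star U * A * U with hBdef
  set w : Fin n → Fin n → ℝ := fun k l => Complex.normSq (B k l) with hwdef
  have key : ∀ t u : ℝ, (Aᴴ * (mpow X t * A * mpow X u)).trace
      = ((∑ l, ∑ k, (lam k ^ t * lam l ^ u) * w k l : ℝ) : ℂ) := by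
    intro t u
    rw [mpow_eq hX.1 t, mpow_eq hX.1 u]
    rw [trace_conj_diag U A hU hU']
    push_cast
    exact Finset.sum_congr rfl fun l _ => Finset.sum_congr rfl fun k _ => by ring
  have hAA : (Aᴴ * A).trace = ((∑ l, ∑ k, w k l : ℝ) : ℂ) := by
    have h0 : mpow X 0 = 1 := by
      rw [mpow_eq hX.1 0]
      simp only [Real.rpow_zero, Complex.ofReal_one, diagonal_one, mul_one]
      exact hU
    have h := key 0 0
    rw [h0] at h
    simp only [Real.rpow_zero, one_mul, mul_one] at h
    simpa using h
  set m : ℝ := Real.exp ω * lmin / lmax with hm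
  set R : ℝ := Real.exp ω * lmax / lmin with hR
  set c : Fin n → Fin n → ℝ := fun k l =>
      Real.exp (ω*s) * (lam k ^ s * lam l ^ (-s))
        + Real.exp (ω*(1-s)) * (lam k ^ (1-s) * lam l ^ (-(1-s))) with hc
  have hG : (Aᴴ * Gop X ω s A).trace = ((∑ l, ∑ k, c k l * w k l : ℝ) : ℂ) := by
    rw [Gop, mul_add, trace_add, mul_smul_comm, mul_smul_comm, trace_smul, trace_smul,
      key s (-s), key (1-s) (-(1-s)), smul_eq_mul, smul_eq_mul, hc]
    push_cast
    rw [Finset.mul_sum, Finset.mul_sum, ← Finset.sum_add_distrib]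
    refine Finset.sum_congr rfl fun l _ => ?_
    rw [Finset.mul_sum, Finset.mul_sum, ← Finset.sum_add_distrib]
    exact Finset.sum_congr rfl fun k _ => by ring
  have coeff : ∀ (k l : Fin n) (t : ℝ), Real.exp (ω*t) * (lam k ^ t * lam l ^ (-t))
      = (Real.exp ω * lam k / lam l) ^ t := by
    intro k l t
    rw [Real.exp_mul, Real.div_rpow (mul_nonneg (Real.exp_pos ω).le (hpos k).le) (hpos l).le,
      Real.mul_rpow (Real.exp_pos ω).le (hpos k).le,
      Real.rpow_neg (hpos l).le, div_eq_mul_inv]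
    ring
  have hterm : ∀ k l : Fin n,
      (2 * Real.sqrt m) * w k l ≤ c k l * w k l ∧
        c k l * w k l ≤ (1 + R) * w k l := by
    intro k l
    set r : ℝ := Real.exp ω * lam k / lam l with hr
    have hcr : c k l = r ^ s + r ^ (1 - s) := by
      rw [hc]; dsimp only; rw [coeff k l s, coeff k l (1-s)]
    have hlmax : 0 < lmax := lt_of_lt_of_le (hpos k) (hspec k).2
    have hm0 : 0 < m := by rw [hm]; positivity
    have hmr : m ≤ r := by
      rw [hm, hr]
      apply div_le_div₀ (mul_nonneg (Real.exp_pos ω).le (hpos k).le)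
        (mul_le_mul_of_nonneg_left (hspec k).1 (Real.exp_pos ω).le)
        (hpos l) (hspec l).2
    have hrR : r ≤ R := by
      rw [hR, hr]
      apply div_le_div₀ (mul_nonneg (Real.exp_pos ω).le hlmax.le)
        (mul_le_mul_of_nonneg_left (hspec k).2 (Real.exp_pos ω).le)
        hlmin (hspec l).1
    obtain ⟨h1, h2⟩ := scalar_bound m R r s hm0 hmr hrR hs0 hs1
    have hw : 0 ≤ w k l := Complex.normSq_nonneg _
    rw [hcr]
    exact ⟨mul_le_mul_of_nonneg_right h1 hw, mul_le_mul_of_nonneg_right h2 hw⟩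
  have lower : (2 * Real.sqrt m) * (∑ l, ∑ k, w k l) ≤ ∑ l, ∑ k, c k l * w k l := by
    rw [Finset.mul_sum]
    refine Finset.sum_le_sum fun l _ => ?_
    rw [Finset.mul_sum]
    exact Finset.sum_le_sum fun k _ => (hterm k l).1
  have upper : (∑ l, ∑ k, c k l * w k l) ≤ (1 + R) * (∑ l, ∑ k, w k l) := by
    rw [Finset.mul_sum]
    refine Finset.sum_le_sum fun l _ => ?_
    rw [Finset.mul_sum]
    exact Finset.sum_le_sum fun k _ => (hterm k l).2
  constructor
  · rw [hAA, hG, ← Complex.ofReal_mul, Complex.real_le_real]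
    exact lower
  · rw [hAA, hG, ← Complex.ofReal_mul, Complex.real_le_real]
    exact upper
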